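/- Let F be a field of characteristic ≠ 2, let U ≤ PSL₂(F) be the image of the upper unitriangular matrices and let u ∈ U be nontrivial. Then the centralizer of u in PSL₂(F) equals U. -/

import Mathlib

open Matrix

variable (F : Type*) [Field F]

/-- `SL₂(F)`. -/
abbrev SL2 := Matrix.SpecialLinearGroup (Fin 2) F

/-- `PSL₂(F) = SL₂(F)/{±I}` (the center of `SL₂(F)`). -/
abbrev PSL2 := SL2 F ⧸ Subgroup.center (SL2 F)

variable {F} in
/-- The unitriangular matrix `[[1,x],[0,1]]` as an element of `SL₂(F)`. -/
def sl2uni (x : F) : SL2 F :=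
  ⟨!![1, x; 0, 1], by simp [Matrix.det_fin_two_of]⟩

variable {F} in
/-- The diagonal matrix `diag(t, t⁻¹)` as an element of `SL₂(F)`. -/
def sl2diag (t : Fˣ) : SL2 F :=
  ⟨!![(t : F), 0; 0, ((t⁻¹ : Fˣ) : F)], by simp [Matrix.det_fin_two_of]⟩

/-- The homomorphism `(F,+) → SL₂(F)`, `x ↦ [[1,x],[0,1]]`. -/
def uniHom : Multiplicative F →* SL2 F where
  toFun x := sl2uni (Multiplicative.toAdd x)
  map_one' := by
    ext i j
    fin_cases i <;> fin_cases j <;> simp [sl2uni]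
  map_mul' x y := by
    apply Subtype.ext
    change (!![1, Multiplicative.toAdd (x * y); 0, 1] : Matrix (Fin 2) (Fin 2) F) =
      !![1, Multiplicative.toAdd x; 0, 1] * !![1, Multiplicative.toAdd y; 0, 1]
    rw [Matrix.mul_fin_two, toAdd_mul]
    ext i j
    fin_cases i <;> fin_cases j <;> simp <;> ring

/-- The homomorphism `F^× → SL₂(F)`, `t ↦ diag(t, t⁻¹)`. -/
def diagHom : Fˣ →* SL2 F where
  toFun t := sl2diag t
  map_one' := by
    ext i j
    fin_cases i <;> fin_cases j <;> simp [sl2diag]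
  map_mul' s t := by
    apply Subtype.ext
    change !![((s * t : Fˣ) : F), 0; 0, (((s * t)⁻¹ : Fˣ) : F)] =
      !![(s : F), 0; 0, ((s⁻¹ : Fˣ) : F)] * !![(t : F), 0; 0, ((t⁻¹ : Fˣ) : F)]
    rw [Matrix.mul_fin_two, _root_.mul_inv_rev]
    ext i j
    fin_cases i <;> fin_cases j <;> simp [mul_comm]

/-- The unipotent subgroup `U ≤ PSL₂(F)`: the image of the upper unitriangular
matrices. -/
def Upsl : Subgroup (PSL2 F) :=
  ((QuotientGroup.mk' (Subgroup.center (SL2 F))).comp (uniHom F)).range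

/-- The diagonal torus `T ≤ PSL₂(F)`: the image of the diagonal matrices of `SL₂(F)`. -/
def Tpsl : Subgroup (PSL2 F) :=
  ((QuotientGroup.mk' (Subgroup.center (SL2 F))).comp (diagHom F)).range

/-! If the class of `A = [[a, b], [c, d]]` commutes with that of `u = [[1, x], [0, 1]]`, then
`r A u = u A` for a scalar `r`. The first columns give `(r - 1) c = 0` and `x c = (r - 1) a`, hence
`c = 0`; then `r ≠ 1` would make both diagonal entries vanish, against `det A = 1`, so `r = 1`
and the upper-right entries give `a = d`. Thus `A = a • [[1, a b], [0, 1]]` with `a = ±1`, which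
is `U` modulo the centre. Conversely `U` is commutative, being an image of `(F, +)`. -/

section

variable {n R : Type*} [Fintype n] [DecidableEq n] [Nonempty n] [CommRing R]

theorem Matrix.SpecialLinearGroup.exists_smul_mul_eq_mul_of_mk_mul_eq
    {A B : SpecialLinearGroup n R}
    (h : (A : SpecialLinearGroup n R ⧸ Subgroup.center _) * B = B * A) :
    ∃ r : R, r • ((A : Matrix n n R) * B) = B * A := by
  rw [← QuotientGroup.mk_mul, ← QuotientGroup.mk_mul, QuotientGroup.eq] at h
  let i : n := Classical.arbitrary n
  refine ⟨((A * B)⁻¹ * (B * A) : SpecialLinearGroup n R) i i, ?_⟩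
  rw [smul_eq_mul_diagonal, ← scalar_apply, scalar_eq_self_of_mem_center h i, ← coe_mul,
    ← coe_mul, mul_inv_cancel_left, coe_mul]

end

section

variable {F}

theorem upper_triangular_of_smul_mul_uni_eq_uni_mul {M : Matrix (Fin 2) (Fin 2) F}
    (hM : M.det = 1) {x r : F} (hx : x ≠ 0)
    (h : r • (M * !![1, x; 0, 1]) = !![1, x; 0, 1] * M) :
    M 1 0 = 0 ∧ M 1 1 = M 0 0 := by
  have e00 := congr_fun₂ h 0 0
  have e01 := congr_fun₂ h 0 1
  have e10 := congr_fun₂ h 1 0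
  have e11 := congr_fun₂ h 1 1
  simp only [Matrix.mul_apply, Fin.sum_univ_two, Matrix.smul_apply, smul_eq_mul, Matrix.of_apply,
    Matrix.cons_val', Matrix.cons_val_zero, Matrix.cons_val_one, Matrix.empty_val',
    Matrix.cons_val_fin_one] at e00 e01 e10 e11
  rw [Matrix.det_fin_two] at hM
  have hc : M 1 0 = 0 := by
    by_cases hr : r = 1
    · subst hr
      exact (mul_eq_zero.mp (by linear_combination -e00 : x * M 1 0 = 0)).resolve_left hx
    · exact (mul_eq_zero.mp (by linear_combination -e10 : (1 - r) * M 1 0 = 0)).resolve_left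
        (sub_ne_zero.mpr (Ne.symm hr))
  have hr : r = 1 := by
    by_contra hr
    have hr' : 1 - r ≠ 0 := sub_ne_zero.mpr (Ne.symm hr)
    have ha : M 0 0 = 0 := (mul_eq_zero.mp
      (by linear_combination -e00 - x * hc : (1 - r) * M 0 0 = 0)).resolve_left hr'
    have hd : M 1 1 = 0 := (mul_eq_zero.mp
      (by linear_combination -e11 + r * x * hc : (1 - r) * M 1 1 = 0)).resolve_left hr'
    simp [ha, hd, hc] at hM
  subst hr
  refine ⟨hc, sub_eq_zero.mp ?_⟩
  exact (mul_eq_zero.mp (by linear_combination -e01 : x * (M 1 1 - M 0 0) = 0)).resolve_left hx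

theorem mk_sl2uni_mem_Upsl (x : F) :
    QuotientGroup.mk' (Subgroup.center (SL2 F)) (sl2uni x) ∈ Upsl F :=
  ⟨Multiplicative.ofAdd x, rfl⟩

theorem mk_mem_Upsl_of_upper_triangular {A : SL2 F} (h10 : A 1 0 = 0) (h11 : A 1 1 = A 0 0) :
    QuotientGroup.mk' (Subgroup.center (SL2 F)) A ∈ Upsl F := by
  have ha : A 0 0 ^ 2 = 1 := by
    have := A.det_coe
    rw [Matrix.det_fin_two, h10, h11] at this
    linear_combination this
  let z : SL2 F := ⟨Matrix.scalar (Fin 2) (A 0 0), by simp [ha]⟩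
  have hz : z ∈ Subgroup.center (SL2 F) :=
    Matrix.SpecialLinearGroup.mem_center_iff.mpr ⟨A 0 0, by simpa using ha, rfl⟩
  -- `A = [[a, b], [0, a]] = a • [[1, a b], [0, 1]]` because `a² = 1`
  refine ⟨Multiplicative.ofAdd (A 0 0 * A 0 1), ?_⟩
  rw [MonoidHom.comp_apply, QuotientGroup.mk'_eq_mk']
  refine ⟨z, hz, Subtype.ext ?_⟩
  change !![1, A 0 0 * A 0 1; 0, 1] * Matrix.scalar (Fin 2) (A 0 0) = A.1
  ext i j
  fin_cases i <;> fin_cases j <;> simp [h10, h11]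
  linear_combination A 0 1 * ha

instance : IsMulCommutative (Upsl F) := Subgroup.range_isMulCommutative _

end

theorem stmt10 (x : F) (hx : x ≠ 0) :
    Subgroup.centralizer {QuotientGroup.mk' (Subgroup.center (SL2 F)) (sl2uni x)} =
      Upsl F := by
  refine le_antisymm (fun g hg => ?_) fun g hg => Subgroup.mem_centralizer_singleton_iff.mpr
    (setLike_mul_comm hg (mk_sl2uni_mem_Upsl x))
  induction g using QuotientGroup.induction_on with
  | H A =>
    obtain ⟨r, hr⟩ := Matrix.SpecialLinearGroup.exists_smul_mul_eq_mul_of_mk_mul_eq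
      (Subgroup.mem_centralizer_singleton_iff.mp hg)
    obtain ⟨h10, h11⟩ := upper_triangular_of_smul_mul_uni_eq_uni_mul A.det_coe hx hr
    exact mk_mem_Upsl_of_upper_triangular h10 h11
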